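/- arXiv:1101.4283 — 5 statements merged into one kernel-verified Lean document; each statement's English description precedes it below -/
import Mathlib

section
/- Let G be a directed multigraph, E an Eulerian extension of G (a multiset of arcs such that G + E is Eulerian), and t a maximum-length trail in the multigraph (V(G), E). Then t is either closed, or its initial vertex has positive balance in G and its terminal vertex has negative balance in G. -/
/-!
A closed walk enters every vertex as often as it leaves it, so `G + E` being Eulerian forces
`balance A = -balance E`. Split `E` into the arcs of `t` and the rest `R`. If `t` is open, its
own arcs give balance `-1` at the start `v` and `+1` at the end `w`; by maximality no arc of `R`
enters `v` or leaves `w` (it could be prepended or appended), so `R` only lowers the balance at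
`v` and only raises it at `w`. Hence `balance E v < 0 < balance E w`.
-/

namespace Stmt1

variable {V : Type*}

def IsWalkFrom : V → V → List (V × V) → Prop
  | u, w, [] => u = w
  | u, w, a :: L => a.1 = u ∧ IsWalkFrom a.2 w L

def indeg [DecidableEq V] (A : Multiset (V × V)) (v : V) : ℕ :=
  Multiset.card (A.filter fun a => a.2 = v)

def outdeg [DecidableEq V] (A : Multiset (V × V)) (v : V) : ℕ :=
  Multiset.card (A.filter fun a => a.1 = v)

/-- Balance of a vertex: indegree minus outdegree. -/
def balance [DecidableEq V] (A : Multiset (V × V)) (v : V) : ℤ :=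
  (indeg A v : ℤ) - (outdeg A v : ℤ)

def Connected (A : Multiset (V × V)) : Prop :=
  ∀ u v : V, Relation.ReflTransGen (fun x y => (x, y) ∈ A ∨ (y, x) ∈ A) u v

def IsEulerian (A : Multiset (V × V)) : Prop :=
  ∃ (v : V) (L : List (V × V)), IsWalkFrom v v L ∧ (↑L : Multiset (V × V)) = A ∧
    ∀ x : V, x = v ∨ ∃ a ∈ L, a.1 = x ∨ a.2 = x

theorem isWalkFrom_append {u w x : V} {L M : List (V × V)}
    (hL : IsWalkFrom u w L) (hM : IsWalkFrom w x M) : IsWalkFrom u x (L ++ M) := by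
  induction L generalizing u with
  | nil => cases hL; exact hM
  | cons a L ih => exact ⟨hL.1, ih hL.2⟩

def IsLongestTrailIn (E : Multiset (V × V)) (L : List (V × V)) : Prop :=
  ∀ (v' w' : V) (L' : List (V × V)), IsWalkFrom v' w' L' →
    (↑L' : Multiset (V × V)) ≤ E → L'.length ≤ L.length

theorem coe_cons_le_of_mem_tsub {α : Type*} [DecidableEq α] {E : Multiset α}
    {L : List α} {a : α} (hL : (↑L : Multiset α) ≤ E) (ha : a ∈ E - ↑L) :
    (↑(a :: L) : Multiset α) ≤ E := by
  rw [← Multiset.cons_coe, ← Multiset.singleton_add, ← le_tsub_iff_right hL]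
  exact Multiset.singleton_le.mpr ha

section Longest

variable [DecidableEq V] {E : Multiset (V × V)} {v w : V} {L : List (V × V)}

theorem IsLongestTrailIn.snd_ne_start (hmax : IsLongestTrailIn E L) (hwalk : IsWalkFrom v w L)
    (htrail : (↑L : Multiset (V × V)) ≤ E) : ∀ a ∈ E - ↑L, a.2 ≠ v := by
  intro a ha hav
  have := hmax a.1 w (a :: L) ⟨rfl, hav ▸ hwalk⟩
    (coe_cons_le_of_mem_tsub htrail ha)
  simp at this

theorem IsLongestTrailIn.fst_ne_end (hmax : IsLongestTrailIn E L) (hwalk : IsWalkFrom v w L)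
    (htrail : (↑L : Multiset (V × V)) ≤ E) : ∀ a ∈ E - ↑L, a.1 ≠ w := by
  intro a ha haw
  have hle : (↑(L ++ [a]) : Multiset (V × V)) ≤ E := by
    rw [Multiset.coe_eq_coe.mpr (List.perm_append_singleton a L)]
    exact coe_cons_le_of_mem_tsub htrail ha
  have := hmax v a.2 (L ++ [a]) (isWalkFrom_append hwalk ⟨haw, rfl⟩) hle
  simp at this

end Longest

section Balance

variable [DecidableEq V]

theorem balance_add (A B : Multiset (V × V)) (x : V) :
    balance (A + B) x = balance A x + balance B x := by
  simp only [balance, indeg, outdeg, Multiset.filter_add, Multiset.card_add]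
  push_cast
  ring

theorem balance_singleton (a : V × V) (x : V) :
    balance {a} x = (if a.2 = x then 1 else 0) - (if a.1 = x then 1 else 0) := by
  simp only [balance, indeg, outdeg, Multiset.filter_singleton]
  split_ifs <;> simp

theorem balance_of_isWalkFrom {u w : V} {L : List (V × V)} (h : IsWalkFrom u w L) (x : V) :
    balance ↑L x = (if w = x then 1 else 0) - (if u = x then 1 else 0) := by
  induction L generalizing u with
  | nil => cases h; simp [balance, indeg, outdeg]
  | cons a L ih =>
    obtain ⟨rfl, h⟩ := h
    rw [← Multiset.cons_coe, ← Multiset.singleton_add, balance_add, balance_singleton, ih h]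
    ring

theorem IsEulerian.balance_eq_zero {A : Multiset (V × V)} (h : IsEulerian A) (x : V) :
    balance A x = 0 := by
  obtain ⟨u, L, hwalk, rfl, -⟩ := h
  simp [balance_of_isWalkFrom hwalk]

theorem balance_nonpos_of_forall_snd_ne {A : Multiset (V × V)} {x : V}
    (h : ∀ a ∈ A, a.2 ≠ x) : balance A x ≤ 0 := by
  simp [balance, indeg, Multiset.filter_eq_nil.mpr h]

theorem balance_nonneg_of_forall_fst_ne {A : Multiset (V × V)} {x : V}
    (h : ∀ a ∈ A, a.1 ≠ x) : 0 ≤ balance A x := by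
  simp [balance, outdeg, Multiset.filter_eq_nil.mpr h]

end Balance

theorem maxTrail_closed_or_imbalanced_endpoints [DecidableEq V]
    (A E : Multiset (V × V))
    -- `E` is an Eulerian extension of `G = (V, A)`:
    (hext : IsEulerian (A + E))
    -- `t = (v, w, L)` is a trail in the multigraph `(V, E)` ...
    (v w : V) (L : List (V × V))
    (hwalk : IsWalkFrom v w L) (htrail : (↑L : Multiset (V × V)) ≤ E)
    -- ... of maximum length among all trails in `(V, E)`:
    (hmax : ∀ (v' w' : V) (L' : List (V × V)), IsWalkFrom v' w' L' →
      (↑L' : Multiset (V × V)) ≤ E → L'.length ≤ L.length) :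
    v = w ∨ (0 < balance A v ∧ balance A w < 0) := by
  by_cases hvw : v = w
  · exact Or.inl hvw
  right
  have hA (x : V) : balance A x = -balance E x := by
    linarith [hext.balance_eq_zero x, balance_add A E x]
  have hE (x : V) : balance E x = balance ↑L x + balance (E - (L : Multiset (V × V))) x := by
    rw [← balance_add, add_tsub_cancel_of_le htrail]
  have hRv := balance_nonpos_of_forall_snd_ne (IsLongestTrailIn.snd_ne_start hmax hwalk htrail)
  have hRw := balance_nonneg_of_forall_fst_ne (IsLongestTrailIn.fst_ne_end hmax hwalk htrail)
  have hLv : balance ↑L v = -1 := by simp [balance_of_isWalkFrom hwalk, Ne.symm hvw]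
  have hLw : balance ↑L w = 1 := by simp [balance_of_isWalkFrom hwalk, hvw]
  constructor <;> linarith [hA v, hA w, hE v, hE w]

end Stmt1
end

section
/- Let G be a directed multigraph with c connected components and let P be a minimal connecting advice for G. Then P contains at most c hints. -/
/-!
Fix a spanning tree `T` of the graph formed by the edges of a minimal connecting advice `P`.
Every hint of `P` uses an edge of `T`: otherwise `T` survives the removal of that hint and the
smaller advice is still connecting. Since the hints are edge-disjoint, no edge of `T` is used by
two hints, so `P` has at most as many hints as `T` has edges, namely `c - 1`.
-/

/- The component graph is modelled as the complete graph on the type `C` of components, a hint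
as a walk in it, and an advice as a set of such walks. -/

namespace Stmt4

def adviceEdges {C : Type*} (P : Set (Σ u : C, Σ v : C, (⊤ : SimpleGraph C).Walk u v)) :
    Set (Sym2 C) :=
  {e | ∃ h ∈ P, e ∈ h.2.2.edges}

def IsConnecting {C : Type*} (P : Set (Σ u : C, Σ v : C, (⊤ : SimpleGraph C).Walk u v)) :
    Prop :=
  (SimpleGraph.fromEdgeSet (adviceEdges P)).Connected

end Stmt4

theorem Set.ncard_le_ncard_of_forall_subsingleton {α β : Type*} {s : Set α} {t : Set β}
    (r : α → β → Prop) (ht : t.Finite) (hs : ∀ a ∈ s, ∃ b ∈ t, r a b)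
    (hsub : ∀ b ∈ t, {a | a ∈ s ∧ r a b}.Subsingleton) : s.ncard ≤ t.ncard := by
  obtain hfin | hinf := s.finite_or_infinite
  · rw [ncard_eq_toFinset_card s hfin, ncard_eq_toFinset_card t ht]
    exact Finset.card_le_card_of_forall_subsingleton r (by simpa using hs) (by simpa using hsub)
  · simp [hinf.ncard]

theorem SimpleGraph.IsTree.ncard_edgeSet_add_one {V : Type*} [Finite V] {T : SimpleGraph V}
    (hT : T.IsTree) : T.edgeSet.ncard + 1 = Nat.card V :=
  (SimpleGraph.isTree_iff_connected_and_card.mp hT).2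

namespace Stmt4

section

open SimpleGraph

variable {C : Type*} {P : Set (Σ u : C, Σ v : C, (⊤ : SimpleGraph C).Walk u v)}

theorem le_fromEdgeSet_adviceEdges_diff_singleton {T : SimpleGraph C}
    (hT : T ≤ fromEdgeSet (adviceEdges P)) {h : Σ u : C, Σ v : C, (⊤ : SimpleGraph C).Walk u v}
    (hh : ∀ e ∈ T.edgeSet, e ∉ h.2.2.edges) : T ≤ fromEdgeSet (adviceEdges (P \ {h})) := by
  rw [le_fromEdgeSet_iff] at hT ⊢
  intro e he
  obtain ⟨h', hh'P, he'⟩ := hT he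
  exact ⟨h', ⟨hh'P, fun hEq => hh e he (hEq ▸ he')⟩, he'⟩

theorem exists_edge_mem_of_minimal
    (hMin : ∀ Q : Set (Σ u : C, Σ v : C, (⊤ : SimpleGraph C).Walk u v),
      Q ⊂ P → ¬ IsConnecting Q)
    {T : SimpleGraph C} (hT : T ≤ fromEdgeSet (adviceEdges P)) (hTconn : T.Connected)
    {h : Σ u : C, Σ v : C, (⊤ : SimpleGraph C).Walk u v} (hP : h ∈ P) :
    ∃ e ∈ T.edgeSet, e ∈ h.2.2.edges := by
  by_contra! hh
  exact hMin _ (Set.sdiff_singleton_ssubset.mpr hP)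
    (hTconn.mono (le_fromEdgeSet_adviceEdges_diff_singleton hT hh))

end

theorem minimal_connecting_advice_card_general {C : Type*} [Fintype C]
    (P : Set (Σ u : C, Σ v : C, (⊤ : SimpleGraph C).Walk u v))
    -- the hints are pairwise edge-disjoint
    (hDisj : ∀ h₁ ∈ P, ∀ h₂ ∈ P, h₁ ≠ h₂ → ∀ e ∈ h₁.2.2.edges, e ∉ h₂.2.2.edges)
    -- `P` is connecting ...
    (hConn : IsConnecting P)
    -- ... and minimally so
    (hMin : ∀ Q : Set (Σ u : C, Σ v : C, (⊤ : SimpleGraph C).Walk u v),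
      Q ⊂ P → ¬ IsConnecting Q) :
    P.ncard ≤ Fintype.card C := by
  obtain ⟨T, hT, hTree⟩ := hConn.exists_isTree_le
  have hcard : P.ncard ≤ T.edgeSet.ncard :=
    Set.ncard_le_ncard_of_forall_subsingleton (fun h e => e ∈ h.2.2.edges) T.edgeSet.toFinite
      (fun h hP => exists_edge_mem_of_minimal hMin hT hTree.connected hP)
      fun e _ h₁ ⟨h₁P, he₁⟩ h₂ ⟨h₂P, he₂⟩ =>
        by_contra fun hne => hDisj h₁ h₁P h₂ h₂P hne e he₁ he₂
  have hedges := hTree.ncard_edgeSet_add_one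
  rw [Nat.card_eq_fintype_card] at hedges
  omega

theorem minimal_connecting_advice_card {C : Type*} [Fintype C] [Nonempty C]
    (P : Set (Σ u : C, Σ v : C, (⊤ : SimpleGraph C).Walk u v))
    -- every element of `P` is a hint: a path or cycle of length at least one
    (hHint : ∀ h ∈ P, 1 ≤ h.2.2.length ∧
      (h.2.2.IsPath ∨ (h.1 = h.2.1 ∧ h.2.2.edges.Nodup ∧ h.2.2.support.tail.Nodup)))
    -- the hints are pairwise edge-disjoint
    (hDisj : ∀ h₁ ∈ P, ∀ h₂ ∈ P, h₁ ≠ h₂ → ∀ e ∈ h₁.2.2.edges, e ∉ h₂.2.2.edges)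
    -- `P` is connecting ...
    (hConn : IsConnecting P)
    -- ... and minimally so
    (hMin : ∀ Q : Set (Σ u : C, Σ v : C, (⊤ : SimpleGraph C).Walk u v),
      Q ⊂ P → ¬ IsConnecting Q) :
    P.ncard ≤ Fintype.card C :=
  minimal_connecting_advice_card_general P hDisj hConn hMin

end Stmt4
end

section
/- Let G = (V₁ ⊎ V₂, E) be a bipartite graph in which every vertex of V₁ has degree at most two. If G has a perfect matching, then every connected component of G contains at most one cycle as a subgraph. -/
/-!
Let `C` be a component and `V₁ ⊎ V₂` the bipartition. Matching partners give an injection from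
`C ∩ V₁` into `C ∩ V₂`, and every edge of `C` has its `V₁`-end in `C ∩ V₁`, a vertex of degree at
most two; hence `C` has at most `2 |C ∩ V₁| ≤ |C|` edges. On the other hand, if two cycles of `C`
had different edge sets, deleting an edge of the first that is not on the second, and then any
edge of the second, would keep `C` connected (each deleted edge lies on a cycle of the current
graph), leaving at least `|C| - 1` edges, so `C` would have at least `|C| + 1` edges.
-/

open Finset

namespace SimpleGraph

variable {V : Type*} {G : SimpleGraph V}

lemma Connected.connected_deleteEdges_of_mem_edges_isCycle (hG : G.Connected) {u : V}
    {c : G.Walk u u} (hc : c.IsCycle) {e : Sym2 V} (he : e ∈ c.edges) :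
    (G.deleteEdges {e}).Connected := by
  induction e with
  | h x y =>
    exact hG.connected_delete_edge_of_not_isBridge fun hb ↦ hb.notMem_edges_of_isCycle hc he

lemma natCard_edgeSet_deleteEdges_singleton_add_one [Finite V] {e : Sym2 V}
    (he : e ∈ G.edgeSet) :
    Nat.card (G.deleteEdges {e}).edgeSet + 1 = Nat.card G.edgeSet := by
  rw [edgeSet_deleteEdges, Nat.card_coe_set_eq, Nat.card_coe_set_eq]
  exact Set.ncard_sdiff_singleton_add_one he

theorem Connected.natCard_add_one_le_natCard_edgeSet_of_isCycle [Finite V] (hG : G.Connected)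
    {u w : V} {c₁ : G.Walk u u} {c₂ : G.Walk w w} (hc₁ : c₁.IsCycle) (hc₂ : c₂.IsCycle) {e : Sym2 V}
    (he₁ : e ∈ c₁.edges) (he₂ : e ∉ c₂.edges) :
    Nat.card V + 1 ≤ Nat.card G.edgeSet := by
  have hG₁ := hG.connected_deleteEdges_of_mem_edges_isCycle hc₁ he₁
  have hc₂' : (c₂.toDeleteEdge e he₂).IsCycle := hc₂.transfer _
  obtain ⟨f, hf⟩ := List.exists_mem_of_ne_nil _ (Walk.edges_eq_nil.not.mpr hc₂'.not_nil)
  have hG₂ := hG₁.connected_deleteEdges_of_mem_edges_isCycle hc₂' hf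
  have h₁ := natCard_edgeSet_deleteEdges_singleton_add_one (c₁.edges_subset_edgeSet he₁)
  have h₂ := natCard_edgeSet_deleteEdges_singleton_add_one (Walk.edges_subset_edgeSet _ hf)
  have := hG₂.card_vert_le_card_edgeSet_add_one
  omega

theorem Connected.edges_subset_of_isCycle [Finite V] (hG : G.Connected)
    (hcard : Nat.card G.edgeSet ≤ Nat.card V) {u w : V} {c₁ : G.Walk u u} {c₂ : G.Walk w w}
    (hc₁ : c₁.IsCycle) (hc₂ : c₂.IsCycle) : c₁.edges ⊆ c₂.edges := fun _ he₁ ↦ by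
  by_contra he₂
  have := hG.natCard_add_one_le_natCard_edgeSet_of_isCycle hc₁ hc₂ he₁ he₂
  omega

lemma Walk.IsCycle.induce {s : Set V} {u : V} {c : G.Walk u u} (hc : c.IsCycle)
    (hs : ∀ x ∈ c.support, x ∈ s) : (c.induce s hs).IsCycle :=
  (Walk.isCycle_map_iff_of_injective (f := (Embedding.induce s).toHom) Subtype.val_injective).mp
    ((c.map_induce hs).symm ▸ hc)

lemma Walk.edges_induce {s : Set V} {u v : V} (c : G.Walk u v) (hs : ∀ x ∈ c.support, x ∈ s) :
    (c.induce s hs).edges.map (Sym2.map Subtype.val) = c.edges := by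
  induction c with
  | nil => rfl
  | cons h p ih => simp [ih]

lemma ConnectedComponent.mem_supp_of_mem_support (C : G.ConnectedComponent) {u v : V} (hu : u ∈ C)
    (c : G.Walk u v) : ∀ x ∈ c.support, x ∈ C.supp := by
  classical
  exact fun x hx ↦ (ConnectedComponent.sound ((c.takeUntil x hx).reachable.symm)).trans hu

theorem ConnectedComponent.edges_subset_of_isCycle [Finite V] (C : G.ConnectedComponent)
    (hcard : Nat.card (G.induce C.supp).edgeSet ≤ Nat.card C.supp) {u w : V} (hu : u ∈ C)
    (hw : w ∈ C) {c₁ : G.Walk u u} {c₂ : G.Walk w w} (hc₁ : c₁.IsCycle) (hc₂ : c₂.IsCycle) :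
    c₁.edges ⊆ c₂.edges := by
  have hs₁ := C.mem_supp_of_mem_support hu c₁
  have hs₂ := C.mem_supp_of_mem_support hw c₂
  rw [← c₁.edges_induce hs₁, ← c₂.edges_induce hs₂]
  exact List.map_subset _ <| C.connected_toSimpleGraph.edges_subset_of_isCycle hcard
    (hc₁.induce hs₁) (hc₂.induce hs₂)

theorem card_edgeFinset_le_of_isBipartiteWith [Fintype V] [DecidableRel G.Adj] {s t : Finset V}
    (h : G.IsBipartiteWith s t) (hdeg : ∀ v ∈ s, G.degree v ≤ 2) (hst : #s ≤ #t) :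
    #G.edgeFinset ≤ Fintype.card V := by
  classical
  calc #G.edgeFinset = ∑ v ∈ s, G.degree v := (isBipartiteWith_sum_degrees_eq_card_edges h).symm
    _ ≤ ∑ _v ∈ s, 2 := sum_le_sum hdeg
    _ ≤ #s + #t := by rw [sum_const, smul_eq_mul]; omega
    _ = #(s ∪ t) := (card_union_of_disjoint (disjoint_coe.mp h.disjoint)).symm
    _ ≤ Fintype.card V := card_le_univ _

theorem Subgraph.IsPerfectMatching.card_le_of_isBipartiteWith {M : G.Subgraph}
    (hM : M.IsPerfectMatching) {s t : Finset V} (h : G.IsBipartiteWith s t) : #s ≤ #t := by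
  choose partner hpartner using fun v ↦ (hM.1 (hM.2 v)).exists
  exact card_le_card_of_injOn partner (fun v hv ↦ h.mem_of_mem_adj hv (M.adj_sub (hpartner v)))
    fun a _ b _ hab ↦ hM.1.eq_of_adj_right (hpartner a) (hab ▸ hpartner b)

theorem IsBipartiteWith.induce {s t : Set V} (h : G.IsBipartiteWith s t) (A : Set V) :
    (G.induce A).IsBipartiteWith (Subtype.val ⁻¹' s) (Subtype.val ⁻¹' t) :=
  ⟨h.disjoint.preimage _, fun _ _ hadj ↦ h.mem_of_adj hadj⟩

theorem Subgraph.IsPerfectMatching.comap_induce_supp {M : G.Subgraph} (hM : M.IsPerfectMatching)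
    (C : G.ConnectedComponent) : (M.comap (Embedding.induce C.supp).toHom).IsPerfectMatching := by
  rw [isPerfectMatching_iff]
  intro v
  obtain ⟨w, hvw, hunique⟩ := (isPerfectMatching_iff).mp hM v
  have hw : w ∈ C.supp := C.mem_supp_of_adj_mem_supp v.2 (M.adj_sub hvw)
  exact ⟨⟨w, hw⟩, ⟨M.adj_sub hvw, hvw⟩, fun x hx ↦ Subtype.ext (hunique x hx.2)⟩

theorem ConnectedComponent.natCard_edgeSet_induce_supp_le [Fintype V] [DecidableRel G.Adj]
    {V₁ V₂ : Set V} (h : G.IsBipartiteWith V₁ V₂) (hdeg : ∀ v ∈ V₁, G.degree v ≤ 2)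
    {M : G.Subgraph} (hM : M.IsPerfectMatching) (C : G.ConnectedComponent) :
    Nat.card (G.induce C.supp).edgeSet ≤ Nat.card C.supp := by
  classical
  have hC : (G.induce C.supp).IsBipartiteWith
      (Subtype.val ⁻¹' V₁ : Set C.supp).toFinset (Subtype.val ⁻¹' V₂ : Set C.supp).toFinset := by
    simpa only [Set.coe_toFinset] using h.induce C.supp
  have hdegC : ∀ v ∈ (Subtype.val ⁻¹' V₁ : Set C.supp).toFinset,
      (G.induce C.supp).degree v ≤ 2 := by
    intro v hv
    rw [degree_induce_of_neighborSet_subset fun w hw ↦ C.mem_supp_of_adj_mem_supp v.2 hw]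
    exact hdeg v (by simpa using hv)
  rw [Nat.card_eq_fintype_card, ← edgeFinset_card, Nat.card_eq_fintype_card]
  exact card_edgeFinset_le_of_isBipartiteWith hC hdegC
    ((hM.comap_induce_supp C).card_le_of_isBipartiteWith hC)

end SimpleGraph

theorem at_most_one_cycle_per_component_general {V : Type*} [Fintype V] [DecidableEq V]
    (G : SimpleGraph V) [DecidableRel G.Adj]
    (V1 V2 : Set V) (hdisj : Disjoint V1 V2)
    (hbip : ∀ u v, G.Adj u v → (u ∈ V1 ∧ v ∈ V2) ∨ (u ∈ V2 ∧ v ∈ V1))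
    (hdeg : ∀ v ∈ V1, G.degree v ≤ 2)
    (hpm : ∃ M : G.Subgraph, M.IsPerfectMatching) :
    ∀ (u w : V) (c1 : G.Walk u u) (c2 : G.Walk w w),
      c1.IsCycle → c2.IsCycle → G.Reachable u w →
      c1.edges.toFinset = c2.edges.toFinset := by
  intro u w c1 c2 hc1 hc2 huw
  obtain ⟨M, hM⟩ := hpm
  set C := G.connectedComponentMk u
  have hcard := C.natCard_edgeSet_induce_supp_le ⟨hdisj, fun x y ↦ hbip x y⟩ hdeg hM
  have hw : w ∈ C := SimpleGraph.ConnectedComponent.sound huw.symm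
  ext e
  simp only [List.mem_toFinset]
  exact ⟨fun he ↦ C.edges_subset_of_isCycle hcard rfl hw hc1 hc2 he,
    fun he ↦ C.edges_subset_of_isCycle hcard hw rfl hc2 hc1 he⟩

theorem at_most_one_cycle_per_component {V : Type*} [Fintype V] [DecidableEq V]
    (G : SimpleGraph V) [DecidableRel G.Adj]
    (V1 V2 : Set V) (hdisj : Disjoint V1 V2) (hunion : V1 ∪ V2 = Set.univ)
    (hbip : ∀ u v, G.Adj u v → (u ∈ V1 ∧ v ∈ V2) ∨ (u ∈ V2 ∧ v ∈ V1))
    (hdeg : ∀ v ∈ V1, G.degree v ≤ 2)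
    (hpm : ∃ M : G.Subgraph, M.IsPerfectMatching) :
    ∀ (u w : V) (c1 : G.Walk u u) (c2 : G.Walk w w),
      c1.IsCycle → c2.IsCycle → G.Reachable u w →
      c1.edges.toFinset = c2.edges.toFinset :=
  at_most_one_cycle_per_component_general G V1 V2 hdisj hbip hdeg hpm
end

section
/- A clause-wise reduction of 3SAT to Conjoining Bipartite Matching is correct: for a boolean formula φ in conjunctive normal form over variables x₁, …, x_n with clauses c₁, …, c_m, build for each variable x_i an undirected cycle with 4m vertices v_i^1, …, v_i^{4m}; define the cell C_j for clause c_j to contain v_i^{4j−1} whenever x_i occurs in c_j, v_i^{4j−2} when x_i occurs positively in c_j, and v_i^{4j} when x_i occurs negatively; let C₀ contain all remaining vertices, and let the join set be {{0, j} : 1 ≤ j ≤ m}. Then φ is satisfiable if and only if the union of cycles has a perfect matching M such that for every join {0, j} some edge of M has one endpoint in C₀ and one in C_j. -/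
/-!  STATEMENT 16: Correctness of the clause-wise reduction of 3SAT to Conjoining Bipartite
Matching.  For a CNF formula over variables `Fin n` with clauses `Fin m` (a clause is a set
of literals `(i, sign)`), build for each variable `i` a cycle on vertices
`(i, p)`, `p ∈ ZMod (4m)` (edges `{(i,p), (i,p+1)}`, matching the 1-indexed vertices
`v_i^1, …, v_i^{4m}` of the paper).  The cell of clause `j` (0-indexed; the paper's clause
`j+1`) contains `(i, 4j+3)` whenever `x_i` occurs in the clause, `(i, 4j+2)` when it occurs
positively and `(i, 4j+4)` when it occurs negatively; `C₀` consists of all remaining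
vertices.  Then `φ` is satisfiable iff the union of cycles has a perfect matching `M` such
that for every join `{0, j}` some edge of `M` has one endpoint in `C_j` and one in `C₀`. -/

namespace Stmt16

/-- The cell `C_j` of clause `j` (clauses are sets of literals; `(i, true)` is the
positive literal `x_i`, `(i, false)` the negative literal `¬x_i`). -/
def cell (n m : ℕ) (clauses : Fin m → Finset (Fin n × Bool)) (j : Fin m) :
    Set (Fin n × ZMod (4 * m)) :=
  {x | (x.2 = ((4 * (j : ℕ) + 3 : ℕ) : ZMod (4 * m)) ∧
          ((x.1, true) ∈ clauses j ∨ (x.1, false) ∈ clauses j)) ∨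
       (x.2 = ((4 * (j : ℕ) + 2 : ℕ) : ZMod (4 * m)) ∧ (x.1, true) ∈ clauses j) ∨
       (x.2 = ((4 * (j : ℕ) + 4 : ℕ) : ZMod (4 * m)) ∧ (x.1, false) ∈ clauses j)}

/-!
A perfect matching of a cycle of length greater than two that uses only cycle edges alternates:
each vertex lies on exactly one of its two edges, so the edges of cycle `i` in the matching are
exactly those of one parity, and `x_i` is read off as "the odd edges are used". The cell of
clause `j` is the union, over the literals of the clause, of the vertices of one cycle edge
(positions `4j+2, 4j+3` for `x_i`, `4j+3, 4j+4` for `¬x_i`), bounded by the `C₀` vertices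
`4j+1` and `4j+5`. A matching edge leaves that union through a literal's edge exactly when that
edge is not in the matching, i.e. when the literal is true.
-/

section Cycles

variable {ι : Type*} {N : ℕ}

def cycleEdge (i : ι) (p : ZMod N) : Sym2 (ι × ZMod N) :=
  s((i, p), (i, p + 1))

theorem mem_cycleEdge {i i' : ι} {p q : ZMod N} :
    (i', q) ∈ cycleEdge i p ↔ i' = i ∧ (q = p ∨ q = p + 1) := by
  simp only [cycleEdge, Sym2.mem_iff, Prod.ext_iff]
  tauto

theorem cycleEdge_ne_cycleEdge_add_one (hN : 2 < N) (i : ι) (p : ZMod N) :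
    cycleEdge i p ≠ cycleEdge i (p + 1) := by
  have hk : ∀ k : ℕ, 0 < k → k < N → (k : ZMod N) ≠ 0 := fun k hk₀ hkN h =>
    absurd (Nat.le_of_dvd hk₀ ((ZMod.natCast_eq_zero_iff k N).1 h)) (by omega)
  intro h
  rcases Sym2.eq_iff.1 h with ⟨h₁, -⟩ | ⟨h₁, -⟩
  · exact hk 1 one_pos (by omega) (by
      push_cast; linear_combination (congrArg Prod.snd h₁).symm)
  · exact hk 2 two_pos hN (by
      push_cast; linear_combination (congrArg Prod.snd h₁).symm)

section PerfectMatching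

variable {M : Set (Sym2 (ι × ZMod N))}

theorem cycleEdge_add_one_mem_iff (hN : 2 < N) (hcyc : ∀ e ∈ M, ∃ i p, e = cycleEdge i p)
    (hpm : ∀ x, ∃! e, e ∈ M ∧ x ∈ e) (i : ι) (p : ZMod N) :
    cycleEdge i (p + 1) ∈ M ↔ cycleEdge i p ∉ M := by
  obtain ⟨e, ⟨he, hxe⟩, huniq⟩ := hpm (i, p + 1)
  constructor
  · intro h₁ h₀
    exact cycleEdge_ne_cycleEdge_add_one hN i p <|
      (huniq _ ⟨h₀, mem_cycleEdge.2 ⟨rfl, .inr rfl⟩⟩).trans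
        (huniq _ ⟨h₁, mem_cycleEdge.2 ⟨rfl, .inl rfl⟩⟩).symm
  · intro h₀
    obtain ⟨i', q, rfl⟩ := hcyc e he
    obtain ⟨rfl, hq | hq⟩ := mem_cycleEdge.1 hxe
    · rwa [hq]
    · rw [add_right_cancel hq] at h₀
      exact absurd he h₀

theorem cycleEdge_natCast_mem_iff (hN : 2 < N) (hcyc : ∀ e ∈ M, ∃ i p, e = cycleEdge i p)
    (hpm : ∀ x, ∃! e, e ∈ M ∧ x ∈ e) (i : ι) (k : ℕ) :
    cycleEdge i (k : ZMod N) ∈ M ↔ (cycleEdge i 0 ∈ M ↔ Even k) := by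
  induction k with
  | zero => simp
  | succ k ih =>
    rw [Nat.cast_succ, cycleEdge_add_one_mem_iff hN hcyc hpm, ih, Nat.even_add_one]
    tauto

end PerfectMatching

def parityMatching (π : ZMod N →+* ZMod 2) (φ : ι → ZMod 2) : Set (Sym2 (ι × ZMod N)) :=
  {e | ∃ i p, e = cycleEdge i p ∧ π p = φ i}

theorem existsUnique_mem_parityMatching (π : ZMod N →+* ZMod 2) (φ : ι → ZMod 2)
    (x : ι × ZMod N) : ∃! e, e ∈ parityMatching π φ ∧ x ∈ e := by
  obtain ⟨i, q⟩ := x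
  have hflip : ∀ a b : ZMod 2, a ≠ b → a - 1 = b := by decide
  let p₀ := if π q = φ i then q else q - 1
  have hp₀ : π p₀ = φ i ∧ (q = p₀ ∨ q = p₀ + 1) := by
    by_cases h : π q = φ i
    · simp [p₀, h]
    · simp [p₀, h, hflip _ _ h]
  refine ⟨cycleEdge i p₀, ⟨⟨i, p₀, rfl, hp₀.1⟩, mem_cycleEdge.2 ⟨rfl, hp₀.2⟩⟩, ?_⟩
  rintro _ ⟨⟨i', p, rfl, hp⟩, hqe⟩
  obtain ⟨rfl, rfl | rfl⟩ := mem_cycleEdge.1 hqe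
  · simp [p₀, hp]
  · have : π (p + 1) ≠ φ i := by
      rw [map_add, map_one, ← hp]
      exact (by decide : ∀ a : ZMod 2, a + 1 ≠ a) _
    rw [show p₀ = p by simp only [p₀, if_neg this, add_sub_cancel_right]]

end Cycles

section Reduction

variable {n m : ℕ} {clauses : Fin m → Finset (Fin n × Bool)}

def literalIndex (j : ℕ) (b : Bool) : ℕ :=
  if b then 4 * j + 2 else 4 * j + 3

theorem even_literalIndex (j : ℕ) (b : Bool) : Even (literalIndex j b) ↔ b = true := by
  cases b <;> simp [literalIndex, Nat.even_iff] <;> omega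

theorem mem_cell_iff {j : Fin m} {i : Fin n} {q : ZMod (4 * m)} :
    (i, q) ∈ cell n m clauses j ↔
      ∃ b, (i, b) ∈ clauses j ∧ (i, q) ∈ cycleEdge i (literalIndex j b : ZMod (4 * m)) := by
  have h₂₃ : ((4 * (j : ℕ) + 2 : ℕ) : ZMod (4 * m)) + 1 = ((4 * (j : ℕ) + 3 : ℕ)) := by
    push_cast; ring
  have h₃₄ : ((4 * (j : ℕ) + 3 : ℕ) : ZMod (4 * m)) + 1 = ((4 * (j : ℕ) + 4 : ℕ)) := by
    push_cast; ring
  simp only [cell, Set.mem_ofPred_eq, Bool.exists_bool, mem_cycleEdge, literalIndex, h₂₃, h₃₄,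
    Bool.false_eq_true, if_true, if_false, true_and]
  tauto

theorem natCast_not_mem_cell {k : ℕ} (hk : k % 4 = 1) (i : Fin n) (j : Fin m) :
    (i, (k : ZMod (4 * m))) ∉ cell n m clauses j := by
  have hne : ∀ t : ℕ, t % 4 ≠ 1 → (k : ZMod (4 * m)) ≠ t := by
    intro t ht h
    have := congrArg (· % 4) ((ZMod.natCast_eq_natCast_iff' k t (4 * m)).1 h)
    simp only [Nat.mod_mod_of_dvd _ (dvd_mul_right 4 m)] at this
    omega
  simp only [cell, Set.mem_ofPred_eq]
  rintro (⟨h, -⟩ | ⟨h, -⟩ | ⟨h, -⟩) <;> exact hne _ (by omega) h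

theorem exists_join_of_mem_clause {i : Fin n} {b : Bool} {j : Fin m} (h : (i, b) ∈ clauses j) :
    ∃ k : ℕ, (Odd k ↔ b = true) ∧ ∃ x y, cycleEdge i (k : ZMod (4 * m)) = s(x, y) ∧
      x ∈ cell n m clauses j ∧ y ∉ ⋃ j' : Fin m, cell n m clauses j' := by
  have hC₀ : ∀ k : ℕ, k % 4 = 1 → (i, (k : ZMod (4 * m))) ∉ ⋃ j' : Fin m, cell n m clauses j' :=
    fun k hk => by simpa only [Set.mem_iUnion, not_exists] using natCast_not_mem_cell hk i
  cases b with
  | true =>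
    have h₁₂ : ((4 * j + 1 : ℕ) : ZMod (4 * m)) + 1 = (literalIndex j true : ℕ) := by
      simp only [literalIndex, if_true]; push_cast; ring
    refine ⟨4 * j + 1, by simp [Nat.odd_iff]; omega,
      (i, ((4 * j + 1 : ℕ) : ZMod (4 * m)) + 1), (i, (4 * j + 1 : ℕ)), Sym2.eq_swap,
      mem_cell_iff.2 ⟨true, h, mem_cycleEdge.2 ⟨rfl, .inl h₁₂⟩⟩, hC₀ _ (by omega)⟩
  | false =>
    have h₃₄ : ((4 * j + 4 : ℕ) : ZMod (4 * m)) = (literalIndex j false : ℕ) + 1 := by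
      simp only [literalIndex, Bool.false_eq_true, if_false]; push_cast; ring
    have h₄₅ : ((4 * j + 4 : ℕ) : ZMod (4 * m)) + 1 = (4 * j + 5 : ℕ) := by push_cast; ring
    refine ⟨4 * j + 4, by simp [Nat.odd_iff]; omega,
      (i, (4 * j + 4 : ℕ)), (i, ((4 * j + 4 : ℕ) : ZMod (4 * m)) + 1), rfl,
      mem_cell_iff.2 ⟨false, h, mem_cycleEdge.2 ⟨rfl, .inr h₃₄⟩⟩, h₄₅ ▸ hC₀ _ (by omega)⟩

theorem exists_literal_not_mem_of_join {M : Set (Sym2 (Fin n × ZMod (4 * m)))}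
    (hpm : ∀ x, ∃! e, e ∈ M ∧ x ∈ e) {j : Fin m} {e : Sym2 (Fin n × ZMod (4 * m))}
    (he : e ∈ M) {x y : Fin n × ZMod (4 * m)} (hxy : e = s(x, y))
    (hx : x ∈ cell n m clauses j) (hy : y ∉ ⋃ j' : Fin m, cell n m clauses j') :
    ∃ b, (x.1, b) ∈ clauses j ∧ cycleEdge x.1 (literalIndex j b : ZMod (4 * m)) ∉ M := by
  obtain ⟨i, q⟩ := x
  obtain ⟨b, hib, hxD⟩ := mem_cell_iff.1 hx
  refine ⟨b, hib, fun hD => hy (Set.mem_iUnion.2 ⟨j, ?_⟩)⟩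
  -- the literal's edge shares the vertex `x` with `e`, so it is `e`, and `y` lies on it
  have hyD : y ∈ cycleEdge i (literalIndex j b : ZMod (4 * m)) :=
    (hpm (i, q)).unique ⟨he, hxy ▸ Sym2.mem_mk_left _ _⟩ ⟨hD, hxD⟩ ▸ hxy ▸ Sym2.mem_mk_right _ _
  obtain ⟨i', q'⟩ := y
  obtain ⟨rfl, -⟩ := mem_cycleEdge.1 hyD
  exact mem_cell_iff.2 ⟨b, hib, hyD⟩

end Reduction

theorem threeSat_iff_conjoining_matching_general (n m : ℕ)
    (clauses : Fin m → Finset (Fin n × Bool)) :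
    -- `φ` is satisfiable
    (∃ ν : Fin n → Bool, ∀ j : Fin m, ∃ lit ∈ clauses j, ν lit.1 = lit.2) ↔
    -- the union of the variable cycles has a perfect conjoining matching
    (∃ M : Set (Sym2 (Fin n × ZMod (4 * m))),
      -- `M` uses only cycle edges
      (∀ e ∈ M, ∃ (i : Fin n) (p : ZMod (4 * m)), e = s((i, p), (i, p + 1))) ∧
      -- `M` is a perfect matching
      (∀ x : Fin n × ZMod (4 * m), ∃! e, e ∈ M ∧ x ∈ e) ∧
      -- every join `{0, j}` is satisfied
      (∀ j : Fin m, ∃ e ∈ M, ∃ a b : Fin n × ZMod (4 * m),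
        e = s(a, b) ∧ a ∈ cell n m clauses j ∧
        b ∉ ⋃ j' : Fin m, cell n m clauses j')) := by
  constructor
  · rintro ⟨ν, hsat⟩
    refine ⟨parityMatching (ZMod.castHom (dvd_mul_of_dvd_left (by norm_num) m) (ZMod 2))
      (fun i => if ν i then 1 else 0), fun e ⟨i, p, he, _⟩ => ⟨i, p, he⟩,
      existsUnique_mem_parityMatching _ _, fun j => ?_⟩
    obtain ⟨⟨i, b⟩, hib, hν : ν i = b⟩ := hsat j
    obtain ⟨k, hk, x, y, hxy, hx, hy⟩ := exists_join_of_mem_clause hib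
    refine ⟨_, ⟨i, k, rfl, ?_⟩, x, y, hxy, hx, hy⟩
    simp only [map_natCast, hν]
    cases b
    · simpa [ZMod.natCast_eq_zero_iff_even] using hk
    · simpa [ZMod.natCast_eq_one_iff_odd] using hk
  · rintro ⟨M, hcyc, hpm, hjoin⟩
    classical
    refine ⟨fun i => decide (cycleEdge i 0 ∉ M), fun j => ?_⟩
    obtain ⟨e, he, x, y, hxy, hx, hy⟩ := hjoin j
    obtain ⟨b, hib, hnot⟩ := exists_literal_not_mem_of_join hpm he hxy hx hy
    refine ⟨(x.1, b), hib, ?_⟩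
    rw [cycleEdge_natCast_mem_iff (by have := j.pos; omega) hcyc hpm, even_literalIndex] at hnot
    cases b <;> simpa using hnot

theorem threeSat_iff_conjoining_matching (n m : ℕ) (hm : 0 < m)
    (clauses : Fin m → Finset (Fin n × Bool)) :
    -- `φ` is satisfiable
    (∃ ν : Fin n → Bool, ∀ j : Fin m, ∃ lit ∈ clauses j, ν lit.1 = lit.2) ↔
    -- the union of the variable cycles has a perfect conjoining matching
    (∃ M : Set (Sym2 (Fin n × ZMod (4 * m))),
      -- `M` uses only cycle edges
      (∀ e ∈ M, ∃ (i : Fin n) (p : ZMod (4 * m)), e = s((i, p), (i, p + 1))) ∧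
      -- `M` is a perfect matching
      (∀ x : Fin n × ZMod (4 * m), ∃! e, e ∈ M ∧ x ∈ e) ∧
      -- every join `{0, j}` is satisfied
      (∀ j : Fin m, ∃ e ∈ M, ∃ a b : Fin n × ZMod (4 * m),
        e = s(a, b) ∧ a ∈ cell n m clauses j ∧
        b ∉ ⋃ j' : Fin m, cell n m clauses j')) :=
  threeSat_iff_conjoining_matching_general n m clauses

end Stmt16
end

section
/- Let instances I₀, …, I_{m−1} of Switch Set Cover each have c colors from a common set C and k switches K₁^i, …, K_k^i. Construct the composite instance I* by: introducing colors o⁰_{α,β}, o¹_{α,β} for 1 ≤ α ≤ k, 1 ≤ β ≤ ⌈log₂ m⌉; adding o¹_{α,β} to every position of K_α^i when the β-th binary digit of i is 1 and o⁰_{α,β} otherwise; letting K*_α be the switch containing all modified positions of K_α^0, …, K_α^{m−1}; and adding switches K_β containing the two positions {o⁰_{1,β}, …, o⁰_{k,β}} and {o¹_{1,β}, …, o¹_{k,β}}. Then I* is a yes-instance of Switch Set Cover if and only if at least one I_i is a yes-instance. -/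
/-!  STATEMENT 19: Correctness of the or-composition algorithm for Switch Set Cover.
Instances `I₀, …, I_{m−1}` share the color set `C` and have `k` switches each (positions
are finite sets of colors).  New colors `o^b_{α,β}` are modeled by `Sum.inr (α, β, b)` with
`α : Fin k`, `β : Fin B`, `b : Bool`, where `B = ⌈log₂ m⌉ = Nat.clog 2 m`.  The position
`P` of switch `K_α^i` is modified by adding `o^{bin(i,β)}_{α,β}` for every `β`; `K*_α`
collects the modified positions of all `K_α^i`; the switch `K_β` has the two positions
`{o⁰_{1,β}, …, o⁰_{k,β}}` and `{o¹_{1,β}, …, o¹_{k,β}}`.  The composite instance `I*` is a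
yes-instance iff some `I_i` is a yes-instance. -/

namespace Stmt19

variable {C : Type*} [DecidableEq C]

/-- The modified position: the original position `P` of switch `α` of instance `i`,
with the binary-identification colors of instance `i` added. -/
def modify (m k B : ℕ) (i : Fin m) (α : Fin k) (P : Finset C) :
    Finset (C ⊕ (Fin k × Fin B × Bool)) :=
  P.image Sum.inl ∪
    (Finset.univ : Finset (Fin B)).image fun β => Sum.inr (α, β, (i : ℕ).testBit (β : ℕ))

/-- The merged switch `K*_α`: all modified positions of the switches `K_α^0, …, K_α^{m−1}`. -/
def Kstar (m k B : ℕ) (K : Fin m → Fin k → Finset (Finset C)) (α : Fin k) :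
    Finset (Finset (C ⊕ (Fin k × Fin B × Bool))) :=
  (Finset.univ : Finset (Fin m)).biUnion fun i => (K i α).image (modify m k B i α)

/-- The instance-chooser switch `K_β` with its two positions. -/
def Kb (k B : ℕ) (β : Fin B) : Finset (Finset (C ⊕ (Fin k × Fin B × Bool))) :=
  { (Finset.univ : Finset (Fin k)).image fun α => Sum.inr (α, β, false),
    (Finset.univ : Finset (Fin k)).image fun α => Sum.inr (α, β, true) }

/-!
A cover of the composite instance must pick, for every `β`, one of the two positions of `K_β`,
say the one made of the colors `o^{b_β}_{α,β}`; the colors `o^{¬b_β}_{α,β}` must then be covered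
by the merged switches, which forces every switch `K*_α` to pick a position coming from an instance
whose index has binary digits `¬b_β`. Since `m ≤ 2^B`, these digits determine the index, so all
chosen positions come from one instance `I_i`, and their original colors cover `C`. Conversely, a
cover of `I_i` lifts to the merged switches, and the positions of the `K_β` complementary to the
digits of `i` cover the remaining new colors.
-/

theorem _root_.Nat.eq_of_testBit_eq_of_lt_two_pow {a b B : ℕ} (ha : a < 2 ^ B) (hb : b < 2 ^ B)
    (h : ∀ n < B, a.testBit n = b.testBit n) : a = b := by
  rw [← Nat.mod_eq_of_lt ha, ← Nat.mod_eq_of_lt hb]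
  refine Nat.eq_of_testBit_eq fun n => ?_
  by_cases hn : n < B <;> simp [hn, h]

/-- The position `{o^b_{1,β}, …, o^b_{k,β}}` of the switch `K_β`. -/
def kbPos (k B : ℕ) (β : Fin B) (b : Bool) : Finset (C ⊕ (Fin k × Fin B × Bool)) :=
  (Finset.univ : Finset (Fin k)).image fun α => Sum.inr (α, β, b)

section Membership

variable {m k B : ℕ}

@[simp]
theorem inl_mem_modify {i : Fin m} {α : Fin k} {P : Finset C} {c : C} :
    (Sum.inl c : C ⊕ (Fin k × Fin B × Bool)) ∈ modify m k B i α P ↔ c ∈ P := by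
  simp [modify]

@[simp]
theorem inr_mem_modify {i : Fin m} {α α' : Fin k} {P : Finset C} {β : Fin B} {b : Bool} :
    Sum.inr (α', β, b) ∈ modify m k B i α P ↔ α' = α ∧ b = (i : ℕ).testBit β := by
  simp [modify, eq_comm, and_comm]

theorem mem_Kstar {K : Fin m → Fin k → Finset (Finset C)} {α : Fin k}
    {Q : Finset (C ⊕ (Fin k × Fin B × Bool))} :
    Q ∈ Kstar m k B K α ↔ ∃ i, ∃ P ∈ K i α, modify m k B i α P = Q := by
  simp [Kstar]

@[simp]
theorem inl_notMem_kbPos {β : Fin B} {b : Bool} {c : C} :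
    (Sum.inl c : C ⊕ (Fin k × Fin B × Bool)) ∉ kbPos k B β b := by
  simp [kbPos]

@[simp]
theorem inr_mem_kbPos {α : Fin k} {β β' : Fin B} {b b' : Bool} :
    (Sum.inr (α, β', b') : C ⊕ (Fin k × Fin B × Bool)) ∈ kbPos k B β b ↔ β' = β ∧ b' = b := by
  simp [kbPos, eq_comm]

theorem mem_Kb {β : Fin B} {Q : Finset (C ⊕ (Fin k × Fin B × Bool))} :
    Q ∈ Kb k B β ↔ ∃ b, Q = kbPos k B β b := by
  simp [Kb, kbPos, Bool.exists_bool]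

end Membership

section Composition

variable {m k B : ℕ} {K : Fin m → Fin k → Finset (Finset C)}

theorem exists_cover_of_cover_composite (hm : 0 < m) (hmB : m ≤ 2 ^ B)
    (ι : Fin k → Fin m) (P : Fin k → Finset C) (hP : ∀ α, P α ∈ K (ι α) α) (b : Fin B → Bool)
    (hcov : ∀ x, (∃ α, x ∈ modify m k B (ι α) α (P α)) ∨ ∃ β, x ∈ kbPos k B β (b β)) :
    ∃ i : Fin m, ∃ f : Fin k → Finset C, (∀ α, f α ∈ K i α) ∧ ∀ x : C, ∃ α, x ∈ f α := by
  have hbits : ∀ α (β : Fin B), (ι α : ℕ).testBit β = !b β := by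
    intro α β
    rcases hcov (Sum.inr (α, β, !b β)) with ⟨α', hx⟩ | ⟨β', hx⟩
    · exact ((inr_mem_modify.mp hx).1 ▸ (inr_mem_modify.mp hx).2).symm
    · obtain ⟨rfl, hb⟩ := inr_mem_kbPos.mp hx
      simp at hb
  have hconst : ∃ i, ∀ α, ι α = i := by
    rcases isEmpty_or_nonempty (Fin k) with hk | ⟨⟨α₀⟩⟩
    · exact ⟨⟨0, hm⟩, isEmptyElim⟩
    · refine ⟨ι α₀, fun α => Fin.ext <| Nat.eq_of_testBit_eq_of_lt_two_pow
        ((ι α).2.trans_le hmB) ((ι α₀).2.trans_le hmB) fun n hn => ?_⟩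
      exact (hbits α ⟨n, hn⟩).trans (hbits α₀ ⟨n, hn⟩).symm
  obtain ⟨i, hi⟩ := hconst
  refine ⟨i, P, fun α => hi α ▸ hP α, fun x => ?_⟩
  rcases hcov (Sum.inl x) with ⟨α, hx⟩ | ⟨β, hx⟩
  · exact ⟨α, inl_mem_modify.mp hx⟩
  · exact absurd hx inl_notMem_kbPos

theorem cover_composite_of_cover (i : Fin m) (f : Fin k → Finset C) (hfcov : ∀ x : C, ∃ α, x ∈ f α)
    (x : C ⊕ (Fin k × Fin B × Bool)) :
    (∃ α, x ∈ modify m k B i α (f α)) ∨ ∃ β, x ∈ kbPos k B β (!(i : ℕ).testBit β) := by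
  rcases x with c | ⟨α, β, b⟩
  · obtain ⟨α, hc⟩ := hfcov c
    exact Or.inl ⟨α, inl_mem_modify.mpr hc⟩
  · by_cases hb : b = (i : ℕ).testBit β
    · exact Or.inl ⟨α, inr_mem_modify.mpr ⟨rfl, hb⟩⟩
    · exact Or.inr ⟨β, inr_mem_kbPos.mpr ⟨rfl, Bool.eq_not.mpr hb⟩⟩

end Composition

theorem composition_correct (m k B : ℕ) (hm : 0 < m) (hB : B = Nat.clog 2 m)
    (K : Fin m → Fin k → Finset (Finset C)) :
    -- the composite instance `I*` is a yes-instance ...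
    (∃ (g : Fin k → Finset (C ⊕ (Fin k × Fin B × Bool)))
       (h : Fin B → Finset (C ⊕ (Fin k × Fin B × Bool))),
        (∀ α, g α ∈ Kstar m k B K α) ∧ (∀ β, h β ∈ Kb k B β) ∧
        ∀ x : C ⊕ (Fin k × Fin B × Bool), (∃ α, x ∈ g α) ∨ (∃ β, x ∈ h β)) ↔
    -- ... iff some input instance `I_i` is a yes-instance
    (∃ i : Fin m, ∃ f : Fin k → Finset C,
        (∀ α, f α ∈ K i α) ∧ ∀ x : C, ∃ α, x ∈ f α) := by
  constructor
  · rintro ⟨g, h, hg, hh, hcov⟩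
    choose ι P hP hg using fun α => mem_Kstar.mp (hg α)
    choose b hh using fun β => mem_Kb.mp (hh β)
    obtain rfl : g = fun α => modify m k B (ι α) α (P α) := funext fun α => (hg α).symm
    obtain rfl : h = fun β => kbPos k B β (b β) := funext hh
    exact exists_cover_of_cover_composite hm (hB ▸ Nat.le_pow_clog one_lt_two m) ι P hP b hcov
  · rintro ⟨i, f, hf, hfcov⟩
    refine ⟨fun α => modify m k B i α (f α), fun β => kbPos k B β (!(i : ℕ).testBit β),
      fun α => mem_Kstar.mpr ⟨i, f α, hf α, rfl⟩, fun β => mem_Kb.mpr ⟨_, rfl⟩,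
      cover_composite_of_cover i f hfcov⟩

end Stmt19
end
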